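/- Sharpness of the bound for Problem 1: consider the path graph G on 5 vertices v₀–v₁–v₂–v₃–v₄ with signal values f = (0, 9, 7, 9, 1) in order, so that PD₀(G,f) ≈ {[0,∞), [1,9), [7,9)}. Then any signal g on the same graph with PD₀(G,g) ≈ {[0,∞),[1,9)} (i.e., with the interval [7,9) of persistence 2 removed and the others preserved) must satisfy |f − g|_∞ ≥ 1. -/

import Mathlib

open scoped Classical

/-- A (multi)graph given by source and target maps on an edge type. -/
structure SrcTgtGraph (V E : Type*) where
  src : E → V
  tgt : E → V

namespace SrcTgtGraph

variable {V E : Type*} (G : SrcTgtGraph V E)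

/-- `e` is an edge joining `x` and `y`. -/
def Ends (e : E) (x y : V) : Prop :=
  (G.src e = x ∧ G.tgt e = y) ∨ (G.src e = y ∧ G.tgt e = x)

/-- The graph is connected. -/
def Connected : Prop :=
  ∀ a b : V, Relation.ReflTransGen (fun x y => ∃ e, G.Ends e x y) a b

/-- Extension of a vertex signal to vertices and edges, `f(e) = max f(V(e))`. -/
def sig (f : V → ℝ) : V ⊕ E → ℝ
  | .inl v => f v
  | .inr e => max (f (G.src e)) (f (G.tgt e))

/-- `pos` realizes a `G`-ordering: a total ordering of `V ⊕ E` along which the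
signal is nondecreasing and every vertex precedes each edge incident to it. -/
def IsGOrdering (f : V → ℝ) (pos : V ⊕ E → ℕ) : Prop :=
  Function.Injective pos ∧
  (∀ a b, pos a ≤ pos b → G.sig f a ≤ G.sig f b) ∧
  (∀ e : E, pos (.inl (G.src e)) < pos (.inr e) ∧ pos (.inl (G.tgt e)) < pos (.inr e))

/-- Connectivity within the subgraph `G_{<k}` of elements with position `< k`. -/
def ConnB (pos : V ⊕ E → ℕ) (k : ℕ) (a b : V) : Prop :=
  pos (.inl a) < k ∧ pos (.inl b) < k ∧
    Relation.ReflTransGen (fun x y => ∃ e, pos (.inr e) < k ∧ G.Ends e x y) a b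

/-- `m` is the `≺`-minimum of the connected component of `v` in `G_{<k}`. -/
def IsCompMin (pos : V ⊕ E → ℕ) (k : ℕ) (m v : V) : Prop :=
  G.ConnB pos k m v ∧ ∀ w, G.ConnB pos k v w → pos (.inl m) ≤ pos (.inl w)

/-- The `≺`-maximal endpoint of an edge. -/
def maxEnd (pos : V ⊕ E → ℕ) (e : E) : V :=
  if pos (.inl (G.src e)) ≤ pos (.inl (G.tgt e)) then G.tgt e else G.src e

/-- `(p, L)` is a basin hierarchy tree of the signal `(G, f)` with respect to the
`G`-ordering `pos`, rooted at the `≺`-minimal vertex `r`, with linking-vertex map `L`. -/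
structure IsBHT (f : V → ℝ) (pos : V ⊕ E → ℕ) (r : V) (p : V → V) (L : V → V) : Prop where
  ordering : G.IsGOrdering f pos
  root_min : ∀ v, pos (.inl r) ≤ pos (.inl v)
  root_fix : p r = r
  reaches : ∀ v, ∃ n, p^[n] v = r
  spec : ∀ v, v ≠ r → ∃ e : E,
    G.IsCompMin pos (pos (.inr e)) v v ∧
    G.IsCompMin pos (pos (.inr e) + 1) (p v) v ∧
    L v = G.maxEnd pos e

end SrcTgtGraph

/-- `u` is an ancestor of `v` in the tree with parent map `p` (`u ⪯_T v`). -/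
def Anc {V : Type*} (p : V → V) (u v : V) : Prop := ∃ n, p^[n] v = u

/-- `f(𝔏(v))`, with value `+∞` at the root. -/
noncomputable def fLink {V : Type*} (f : V → ℝ) (r : V) (L : V → V) (v : V) : EReal :=
  if v = r then ⊤ else (f (L v) : EReal)

/-- The persistence `pers(v) = f(𝔏(v)) - f(v)` of a vertex in a BHT. -/
noncomputable def persBHT {V : Type*} (f : V → ℝ) (r : V) (L : V → V) (v : V) : EReal :=
  fLink f r L v - (f v : EReal)

namespace SrcTgtGraph

variable {V E : Type*} (G : SrcTgtGraph V E)

/-- The component of `v` dies at the edge `e`: `v` is the minimum of its component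
just before `e` is added, and no longer after. -/
def DiesAt (pos : V ⊕ E → ℕ) (v : V) (e : E) : Prop :=
  G.IsCompMin pos (pos (.inr e)) v v ∧ ¬ G.IsCompMin pos (pos (.inr e) + 1) v v

/-- The death value of the component created by `v` (`+∞` if permanent). -/
noncomputable def deathVal (f : V → ℝ) (pos : V ⊕ E → ℕ) (v : V) : EReal :=
  if h : ∃ e, G.DiesAt pos v e then ((G.sig f (.inr h.choose) : ℝ) : EReal) else ⊤

/-- The degree-0 persistence diagram of `(G, f)`, as a multiset of intervals
`[birth, death)` (including trivial intervals). -/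
noncomputable def PD0 [Fintype V] (f : V → ℝ) (pos : V ⊕ E → ℕ) : Multiset (EReal × EReal) :=
  Finset.univ.val.map fun v : V => ((f v : EReal), G.deathVal f pos v)

end SrcTgtGraph

/-- The nontrivial part of a multiset of intervals. -/
noncomputable def nontriv (M : Multiset (EReal × EReal)) : Multiset (EReal × EReal) :=
  M.filter fun ab => ab.1 < ab.2

/-- The 0-low-persistence filter associated to a BHT `(p, L)` rooted at `r`. -/
noncomputable def LPF {V : Type*} [Fintype V] (f : V → ℝ) (r : V) (p L : V → V)
    (ε : ℝ) (v : V) : ℝ :=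
  (insert (f v) ((Finset.univ.filter fun u => Anc p u v ∧ persBHT f r L u < (ε : EReal)).image
    fun u => f (L u))).max' (Finset.insert_nonempty _ _)

/-- The path graph `v₀ – v₁ – v₂ – v₃ – v₄` on five vertices. -/
def pathGraph5 : SrcTgtGraph (Fin 5) (Fin 4) :=
  ⟨fun i => i.castSucc, fun i => i.succ⟩

/-- The signal `(0, 9, 7, 9, 1)` on the path graph. -/
noncomputable def f5 : Fin 5 → ℝ := ![0, 9, 7, 9, 1]

/-- Sharpness of the bound: for the signal `(0, 9, 7, 9, 1)` on the path graph on
five vertices (whose `PD₀` is `{[0,∞), [1,9), [7,9)}` up to trivial intervals),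
any signal `g` whose `PD₀` is, up to trivial intervals, `{[0,∞), [1,9)}`
(the interval `[7,9)` of persistence `2` removed and the others preserved) must
differ from `f` by at least `1` in the sup norm. -/
theorem sharpness_path_graph (g : Fin 5 → ℝ) (pos : Fin 5 ⊕ Fin 4 → ℕ)
    (hord : pathGraph5.IsGOrdering g pos)
    (hPD : nontriv (pathGraph5.PD0 g pos) =
      nontriv {(((0 : ℝ) : EReal), (⊤ : EReal)), (((1 : ℝ) : EReal), ((9 : ℝ) : EReal))}) :
    ∃ v : Fin 5, 1 ≤ |f5 v - g v| := by
  by_contra hcon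
  push_neg at hcon
  have hb : ∀ v, f5 v - 1 < g v ∧ g v < f5 v + 1 := by
    intro v
    have := hcon v
    rw [abs_lt] at this
    constructor <;> linarith [this.1, this.2]
  have h0 : g 0 < 8 := by have := (hb 0).2; simp [f5] at this; linarith
  have h2 : g 2 < 8 := by have := (hb 2).2; simp [f5] at this; linarith
  have h4 : g 4 < 8 := by have := (hb 4).2; simp [f5] at this; linarith
  have h1 : 8 < g 1 := by have := (hb 1).1; simp [f5] at this; linarith
  have h3 : 8 < g 3 := by have := (hb 3).1; simp [f5] at this; linarith
  -- every edge has signal value > 8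
  have hedge : ∀ e : Fin 4, (8 : ℝ) < pathGraph5.sig g (.inr e) := by
    intro e
    fin_cases e <;>
      simp only [SrcTgtGraph.sig, pathGraph5] <;>
      · rw [lt_max_iff]
        first
          | exact Or.inl h1 | exact Or.inr h1 | exact Or.inl h3 | exact Or.inr h3
  -- so the death value of any vertex with g v < 8 exceeds g v
  have hdeath : ∀ v : Fin 5, g v < 8 → (g v : EReal) < pathGraph5.deathVal g pos v := by
    intro v hv
    unfold SrcTgtGraph.deathVal
    split
    · next h =>
        exact_mod_cast lt_trans (by exact_mod_cast hv) (by exact_mod_cast hedge h.choose)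
    · exact EReal.coe_lt_top _
  -- the nontrivial part of PD0 g has at least 3 elements
  have hcard : 3 ≤ Multiset.card (nontriv (pathGraph5.PD0 g pos)) := by
    unfold nontriv SrcTgtGraph.PD0
    rw [Multiset.filter_map]
    rw [Multiset.card_map]
    have hsub : ({0, 2, 4} : Finset (Fin 5)) ⊆
        Finset.univ.filter (fun v : Fin 5 =>
          ((g v : EReal), pathGraph5.deathVal g pos v).1 <
            ((g v : EReal), pathGraph5.deathVal g pos v).2) := by
      intro v hv
      simp only [Finset.mem_insert, Finset.mem_singleton] at hv
      simp only [Finset.mem_filter, Finset.mem_univ, true_and]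
      rcases hv with rfl | rfl | rfl
      · exact hdeath _ h0
      · exact hdeath _ h2
      · exact hdeath _ h4
    have := Finset.card_le_card hsub
    have h3 : ({0, 2, 4} : Finset (Fin 5)).card = 3 := by decide
    rw [h3] at this
    exact this
  -- but the right-hand side has exactly 2 elements
  rw [hPD] at hcard
  have : Multiset.card (nontriv {(((0 : ℝ) : EReal), (⊤ : EReal)),
      (((1 : ℝ) : EReal), ((9 : ℝ) : EReal))}) = 2 := by
    have h19 : (1 : EReal) < ((9 : ℝ) : EReal) := by
      exact_mod_cast (by norm_num : (1 : ℝ) < 9)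
    simp [nontriv, Multiset.insert_eq_cons, Multiset.filter_cons, Multiset.filter_singleton, EReal.coe_lt_top, h19]
  omega
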